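/- An ELP rule s is subsumed by an ELP rule r if and only if, for the single-rule ELPs Π_r = (𝒜, ℰ, {r}) and Π_s = (𝒜, ℰ, {s}), it holds that 𝒮ℰ_{Π_r}(Φ) ⊆ 𝒮ℰ_{Π_s}(Φ) for all guesses Φ ⊆ ℰ. -/

import Mathlib

variable {V : Type}

/-- A (default-negation) literal: an atom or its default negation. -/
inductive Lit (V : Type) : Type
  | pos (a : V) : Lit V
  | neg (a : V) : Lit V

namespace Lit

/-- `I ⊨ ℓ`. -/
def sat (I : Set V) : Lit V → Prop
  | pos a => a ∈ I
  | neg a => a ∉ I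

/-- The complementary literal (so that `I ⊨ ¬ℓ` iff `I ⊨ ℓ.flip`). -/
def flip : Lit V → Lit V
  | pos a => neg a
  | neg a => pos a

/-- The underlying atom of a literal. -/
def atom : Lit V → V
  | pos a => a
  | neg a => a

end Lit

/-- A standard (ASP) rule `head ← pos, {¬ℓ | ℓ ∈ neg}`; the set `neg` collects the
literals occurring under one extra default negation in the body (so an atom `a ∈ pos`
is a positive body atom, `Lit.pos c ∈ neg` encodes the body element `¬c`, and
`Lit.neg d ∈ neg` encodes the doubly negated body element `¬¬d`). -/
structure Rule (V : Type) : Type where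
  head : Set V
  pos : Set V
  neg : Set (Lit V)

namespace Rule

/-- The rule only uses atoms from `A`. -/
def wf (r : Rule V) (A : Set V) : Prop :=
  r.head ⊆ A ∧ r.pos ⊆ A ∧ ∀ ℓ ∈ r.neg, ℓ.atom ∈ A

/-- `I` is a model of the rule. -/
def sat (I : Set V) (r : Rule V) : Prop :=
  (r.pos ⊆ I ∧ ∀ ℓ ∈ r.neg, ¬ ℓ.sat I) → ∃ a ∈ r.head, a ∈ I

/-- `X` satisfies the GL-reduct of the rule w.r.t. `Y`: if the rule survives the
reduct (no negated body literal is satisfied by `Y`), then `X` satisfies the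
remaining rule `head ← pos`. -/
def redSat (Y X : Set V) (r : Rule V) : Prop :=
  (∀ ℓ ∈ r.neg, ¬ ℓ.sat Y) → (r.pos ⊆ X → ∃ a ∈ r.head, a ∈ X)

end Rule

/-- A ground logic program `(𝒜, ℛ)`. -/
structure Program (V : Type) : Type where
  A : Set V
  R : Set (Rule V)

namespace Program

def wf (P : Program V) : Prop := ∀ r ∈ P.R, r.wf P.A

/-- `I ⊨ P`. -/
def model (P : Program V) (I : Set V) : Prop := ∀ r ∈ P.R, r.sat I

/-- `X ⊨ P^Y` (the GL-reduct). -/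
def redModel (P : Program V) (Y X : Set V) : Prop := ∀ r ∈ P.R, r.redSat Y X

/-- `M` is an answer set of `P`. -/
def answerSet (P : Program V) (M : Set V) : Prop :=
  M ⊆ P.A ∧ P.model M ∧ ¬ ∃ M', M' ⊂ M ∧ P.redModel M M'

/-- `AS(P)`, the set of answer sets. -/
def AS (P : Program V) : Set (Set V) := {M | P.answerSet M}

/-- The set of SE-models `(X,Y)` with `X ⊆ Y ⊆ 𝒜`, `Y ⊨ P` and `X ⊨ P^Y`. -/
def SE (P : Program V) : Set (Set V × Set V) :=
  {p | p.1 ⊆ p.2 ∧ p.2 ⊆ P.A ∧ P.model p.2 ∧ P.redModel p.2 p.1}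

/-- Componentwise union of programs. -/
def union (P₁ P₂ : Program V) : Program V := ⟨P₁.A ∪ P₂.A, P₁.R ∪ P₂.R⟩

/-- Strong equivalence of plain logic programs. -/
def strongEq (P₁ P₂ : Program V) : Prop :=
  ∀ P : Program V, P.wf → (P₁.union P).AS = (P₂.union P).AS

end Program

/-- An ELP rule `head ← opos, ¬oneg, not epos, ¬ not eneg`: epistemic literals `not ℓ`
are identified with the literal `ℓ` they negate; `epos` collects the literals occurring
under plain epistemic negation and `eneg` those occurring under default-negated
epistemic negation. -/
structure ERule (V : Type) : Type where
  head : Set V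
  opos : Set V
  oneg : Set (Lit V)
  epos : Set (Lit V)
  eneg : Set (Lit V)

namespace ERule

/-- The rule only uses atoms from `A` and epistemic literals from `E`. -/
def wf (r : ERule V) (A : Set V) (E : Set (Lit V)) : Prop :=
  r.head ⊆ A ∧ r.opos ⊆ A ∧ (∀ ℓ ∈ r.oneg, ℓ.atom ∈ A) ∧ r.epos ⊆ E ∧ r.eneg ⊆ E

/-- The rule of the epistemic reduct w.r.t. guess `Φ` (meaningful when no `eneg`
literal belongs to `Φ`, in which case: epistemic literals `not ℓ ∈ Φ` become `⊤`,
the remaining `not ℓ` in `epos` become `¬ℓ`, and `¬ not ℓ` in `eneg` becomes `¬¬ℓ`,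
i.e. `¬(ℓ.flip)`, reading triple negations as single ones). -/
def reduct (r : ERule V) (Φ : Set (Lit V)) : Rule V :=
  ⟨r.head, r.opos, r.oneg ∪ (r.epos \ Φ) ∪ (Lit.flip '' r.eneg)⟩

/-- The underlying plain rule of an epistemic-negation-free ELP rule. -/
def toRule (r : ERule V) : Rule V := ⟨r.head, r.opos, r.oneg⟩

end ERule

/-- A plain rule viewed as an ELP rule. -/
def Rule.toERule (r : Rule V) : ERule V := ⟨r.head, r.pos, r.neg, ∅, ∅⟩

/-- An epistemic logic program `(𝒜, ℰ, ℛ)`. -/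
structure ELP (V : Type) : Type where
  A : Set V
  E : Set (Lit V)
  R : Set (ERule V)

/-- `I` is `Φ`-compatible w.r.t. `E`. -/
def compatible (E Φ : Set (Lit V)) (I : Set (Set V)) : Prop :=
  I.Nonempty ∧ (∀ ℓ ∈ Φ, ∃ J ∈ I, ¬ ℓ.sat J) ∧ (∀ ℓ ∈ E \ Φ, ∀ J ∈ I, ℓ.sat J)

/-- `Φ` is realizable in the set `I` of interpretations (w.r.t. `E`). -/
def realizableIn (E Φ : Set (Lit V)) (I : Set (Set V)) : Prop :=
  ∃ I', I' ⊆ I ∧ compatible E Φ I'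

/-- A guess `Φ` is consistent w.r.t. `E`: whenever `E` contains both `not a` and
`not ¬a`, `Φ` contains at least one of them. -/
def consistentGuess (E Φ : Set (Lit V)) : Prop :=
  ∀ a : V, Lit.pos a ∈ E → Lit.neg a ∈ E → (Lit.pos a ∈ Φ ∨ Lit.neg a ∈ Φ)

namespace ELP

/-- Well-formedness: `E` consists of epistemic literals over `A`, and every rule is
over `A` and `E`. -/
def wf (P : ELP V) : Prop :=
  (∀ ℓ ∈ P.E, ℓ.atom ∈ P.A) ∧ ∀ r ∈ P.R, r.wf P.A P.E

/-- An epistemic-negation-free (plain ASP) program viewed as an ELP. -/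
def isASP (P : ELP V) : Prop := P.E = ∅ ∧ ∀ r ∈ P.R, r.epos = ∅ ∧ r.eneg = ∅

/-- Componentwise union of ELPs. -/
def union (P₁ P₂ : ELP V) : ELP V := ⟨P₁.A ∪ P₂.A, P₁.E ∪ P₂.E, P₁.R ∪ P₂.R⟩

/-- The epistemic reduct `P^Φ`: rules with some `eneg` literal in `Φ` are deleted
(their body contains `¬⊤`), the remaining rules are reduced. -/
def eReduct (P : ELP V) (Φ : Set (Lit V)) : Program V :=
  ⟨P.A, {q | ∃ r ∈ P.R, (∀ ℓ ∈ r.eneg, ℓ ∉ Φ) ∧ q = r.reduct Φ}⟩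

/-- `M` is a candidate world view of `P` w.r.t. the guess `Φ`. -/
def isCWVwrt (P : ELP V) (Φ : Set (Lit V)) (M : Set (Set V)) : Prop :=
  Φ ⊆ P.E ∧ M = (P.eReduct Φ).AS ∧ compatible P.E Φ M

/-- `M` is a candidate world view of `P`. -/
def isCWV (P : ELP V) (M : Set (Set V)) : Prop := ∃ Φ, P.isCWVwrt Φ M

/-- `M` is a world view of `P`: a CWV whose associated guess is subset-maximal. -/
def isWV (P : ELP V) (M : Set (Set V)) : Prop :=
  ∃ Φ, P.isCWVwrt Φ M ∧ ∀ Φ' M', P.isCWVwrt Φ' M' → ¬ Φ ⊂ Φ'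

/-- `Φ` is realizable in `P`: realizable in the set of models of `P^Φ`. -/
def realizable (P : ELP V) (Φ : Set (Lit V)) : Prop :=
  realizableIn P.E Φ {I | I ⊆ P.A ∧ (P.eReduct Φ).model I}

/-- The SE-function of `P`: `SE(Π^Φ)` if `Φ` is realizable in `P`, and `∅` otherwise. -/
def SEfun (P : ELP V) (Φ : Set (Lit V)) : Set (Set V × Set V) :=
  {p | P.realizable Φ ∧ p ∈ (P.eReduct Φ).SE}

/-- CWV-equivalence. -/
def cwvEq (P₁ P₂ : ELP V) : Prop := ∀ M, P₁.isCWV M ↔ P₂.isCWV M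

/-- WV-equivalence. -/
def wvEq (P₁ P₂ : ELP V) : Prop := ∀ M, P₁.isWV M ↔ P₂.isWV M

/-- Strong ELP-CWV-equivalence. -/
def strongELPCWVEq (P₁ P₂ : ELP V) : Prop :=
  ∀ Q : ELP V, Q.wf → cwvEq (P₁.union Q) (P₂.union Q)

/-- Strong ELP-WV-equivalence. -/
def strongELPWVEq (P₁ P₂ : ELP V) : Prop :=
  ∀ Q : ELP V, Q.wf → wvEq (P₁.union Q) (P₂.union Q)

/-- Strong ASP-CWV-equivalence. -/
def strongASPCWVEq (P₁ P₂ : ELP V) : Prop :=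
  ∀ Q : ELP V, Q.wf → Q.isASP → cwvEq (P₁.union Q) (P₂.union Q)

/-- Strong ASP-WV-equivalence. -/
def strongASPWVEq (P₁ P₂ : ELP V) : Prop :=
  ∀ Q : ELP V, Q.wf → Q.isASP → wvEq (P₁.union Q) (P₂.union Q)

end ELP

/-- The Gelfond-CWA program `p' ← ¬ not ¬p` over `𝒜 = {p, p'}`, `ℰ = {not p, not ¬p}`. -/
def GelfondCWA (p p' : V) : ELP V :=
  ⟨{p, p'}, {Lit.pos p, Lit.neg p}, {⟨{p'}, ∅, ∅, ∅, {Lit.neg p}⟩}⟩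

/-- The Shen-Eiter-CWA program `p' ← not p` over `𝒜 = {p, p'}`, `ℰ = {not p, not ¬p}`. -/
def ShenEiterCWA (p p' : V) : ELP V :=
  ⟨{p, p'}, {Lit.pos p, Lit.neg p}, {⟨{p'}, ∅, ∅, {Lit.pos p}, ∅⟩}⟩

/-!
(⇐) SE-models decide answer sets in every context: if `SE(Π_r^Φ) ⊆ SE(Π_s^Φ)`, adding the
reduct of `s` to `Π_r^Φ ∪ G` changes no answer set, for any plain context `G`, even one over a
larger alphabet. A candidate world view of either side for a guess `Φ` shows that `Φ ∩ ℰ` is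
realizable in `Π_r`, which is exactly when the hypothesis on the SE-functions has content.

(⇒) Adding the constraints `⊥ ← ¬ not ℓ` for `ℓ ∈ Φ` to a context forces every candidate world
view that satisfies the literals outside `Φ` to come from the guess `Φ`. Strong equivalence then
says that no plain context `T` separates the answer sets of `Π_r^Φ ∪ T` and `(Π_r ∪ Π_s)^Φ ∪ T`
when one of the two families is `Φ`-compatible. Rules whose negative body holds exactly at a
given interpretation let `T` prescribe the answer sets: it first makes a family realizing `Φ` in
`Π_r` the answer sets, forcing its members to be models of `Π_s^Φ`, and then keeps or removes a
single interpretation `Y` according to whether `(X, Y)` is an SE-model, which detects every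
SE-model of `Π_r^Φ` that is not one of `Π_s^Φ`.
-/

namespace Lit

lemma sat_flip (ℓ : Lit V) (J : Set V) : ℓ.flip.sat J ↔ ¬ ℓ.sat J := by
  cases ℓ <;> simp [flip, sat]

lemma atom_flip (ℓ : Lit V) : ℓ.flip.atom = ℓ.atom := by
  cases ℓ <;> rfl

lemma sat_inter_iff {A J : Set V} {ℓ : Lit V} (h : ℓ.atom ∈ A) : ℓ.sat (J ∩ A) ↔ ℓ.sat J := by
  cases ℓ <;> simp_all [sat, atom]

def guard (A S : Set V) : Set (Lit V) := pos '' (A \ S) ∪ neg '' S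

lemma forall_not_sat_guard_iff {A S J : Set V} (hS : S ⊆ A) (hJ : J ⊆ A) :
    (∀ ℓ ∈ guard A S, ¬ ℓ.sat J) ↔ J = S := by
  simp only [guard, Set.mem_union, or_imp, forall_and, Set.forall_mem_image, sat, not_not,
    Set.mem_sdiff]
  constructor
  · rintro ⟨hout, hin⟩
    exact Set.Subset.antisymm (fun x hx => by_contra fun hxS => hout ⟨hJ hx, hxS⟩ hx) hin
  · rintro rfl
    exact ⟨fun x hx => hx.2, fun x hx => hx⟩

lemma atom_mem_of_mem_guard {A S : Set V} (hS : S ⊆ A) {ℓ : Lit V} (hℓ : ℓ ∈ guard A S) :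
    ℓ.atom ∈ A := by
  rcases hℓ with ⟨a, ha, rfl⟩ | ⟨a, ha, rfl⟩
  exacts [ha.1, hS ha]

end Lit

namespace Rule

lemma sat_iff_redSat_self {r : Rule V} {I : Set V} : r.sat I ↔ r.redSat I I := by
  simp only [sat, redSat, and_imp]
  exact forall_comm

lemma redSat_inter_iff {A Y X : Set V} {r : Rule V} (hr : r.wf A) :
    r.redSat (Y ∩ A) (X ∩ A) ↔ r.redSat Y X := by
  obtain ⟨hh, hp, hn⟩ := hr
  have hneg : (∀ ℓ ∈ r.neg, ¬ ℓ.sat (Y ∩ A)) ↔ ∀ ℓ ∈ r.neg, ¬ ℓ.sat Y :=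
    forall₂_congr fun ℓ hℓ => not_congr (Lit.sat_inter_iff (hn ℓ hℓ))
  have hpos : r.pos ⊆ X ∩ A ↔ r.pos ⊆ X := by simp [Set.subset_inter_iff, hp]
  have hhead : (∃ a ∈ r.head, a ∈ X ∩ A) ↔ ∃ a ∈ r.head, a ∈ X :=
    exists_congr fun _ => and_congr_right fun ha => ⟨And.left, fun h => ⟨h, hh ha⟩⟩
  simp only [redSat, hneg, hpos, hhead]

lemma sat_inter_iff {A I : Set V} {r : Rule V} (hr : r.wf A) : r.sat (I ∩ A) ↔ r.sat I := by
  rw [sat_iff_redSat_self, sat_iff_redSat_self, redSat_inter_iff hr]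

lemma toERule_reduct (r : Rule V) (Φ : Set (Lit V)) : r.toERule.reduct Φ = r := by
  simp [toERule, ERule.reduct]

end Rule

namespace Program

lemma model_union {P Q : Program V} {I : Set V} :
    (P.union Q).model I ↔ P.model I ∧ Q.model I :=
  forall₂_or_left

lemma redModel_union {P Q : Program V} {Y X : Set V} :
    (P.union Q).redModel Y X ↔ P.redModel Y X ∧ Q.redModel Y X :=
  forall₂_or_left

/-- Restrict to `P₁.A`: well-formed rules do not see the atoms outside it. -/
lemma model_redModel_of_SE_subset {P₁ P₂ : Program V} (h₁ : P₁.wf) (h₂ : P₂.wf)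
    (hA : P₁.A = P₂.A) (hSE : P₁.SE ⊆ P₂.SE) {X Y : Set V} (hXY : X ⊆ Y) (hY : P₁.model Y)
    (hX : P₁.redModel Y X) : P₂.model Y ∧ P₂.redModel Y X := by
  have hmem : (X ∩ P₁.A, Y ∩ P₁.A) ∈ P₁.SE :=
    ⟨Set.inter_subset_inter_left _ hXY, Set.inter_subset_right,
      fun r hr => (Rule.sat_inter_iff (h₁ r hr)).2 (hY r hr),
      fun r hr => (Rule.redSat_inter_iff (h₁ r hr)).2 (hX r hr)⟩
  obtain ⟨-, -, hY₂, hX₂⟩ := hSE hmem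
  rw [hA] at hY₂ hX₂
  exact ⟨fun r hr => (Rule.sat_inter_iff (h₂ r hr)).1 (hY₂ r hr),
    fun r hr => (Rule.redSat_inter_iff (h₂ r hr)).1 (hX₂ r hr)⟩

theorem AS_union_eq_of_SE_subset {P₁ P₂ : Program V} (h₁ : P₁.wf) (h₂ : P₂.wf)
    (hA : P₁.A = P₂.A) (hSE : P₁.SE ⊆ P₂.SE) (G : Program V) :
    (P₁.union G).AS = ((P₁.union P₂).union G).AS := by
  have hAlph : ((P₁.union P₂).union G).A = (P₁.union G).A := by
    simp [union, ← hA]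
  ext J
  simp only [AS, Set.mem_ofPred_eq, answerSet, hAlph, model_union, redModel_union]
  constructor
  · rintro ⟨hJ, ⟨h₁J, hGJ⟩, hmin⟩
    refine ⟨hJ, ⟨⟨h₁J, ?_⟩, hGJ⟩, fun ⟨M, hM, ⟨hM₁, _⟩, hMG⟩ => hmin ⟨M, hM, hM₁, hMG⟩⟩
    exact (model_redModel_of_SE_subset h₁ h₂ hA hSE subset_rfl h₁J
      fun r hr => Rule.sat_iff_redSat_self.1 (h₁J r hr)).1
  · rintro ⟨hJ, ⟨⟨h₁J, -⟩, hGJ⟩, hmin⟩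
    refine ⟨hJ, ⟨h₁J, hGJ⟩, fun ⟨M, hM, hM₁, hMG⟩ => hmin ⟨M, hM, ⟨hM₁, ?_⟩, hMG⟩⟩
    exact (model_redModel_of_SE_subset h₁ h₂ hA hSE hM.1 h₁J hM₁).2

end Program

lemma ERule.reduct_inter {r : ERule V} {E : Set (Lit V)} (h : r.epos ⊆ E) (Φ : Set (Lit V)) :
    r.reduct (Φ ∩ E) = r.reduct Φ := by
  have : r.epos \ (Φ ∩ E) = r.epos \ Φ := by
    ext ℓ
    simp only [Set.mem_sdiff, Set.mem_inter_iff, not_and]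
    exact and_congr_right fun hℓ => ⟨fun hn hΦ => hn hΦ (h hℓ), fun hn hΦ _ => hn hΦ⟩
  simp only [ERule.reduct, this]

namespace ELP

lemma eReduct_union (P Q : ELP V) (Φ : Set (Lit V)) :
    (P.union Q).eReduct Φ = (P.eReduct Φ).union (Q.eReduct Φ) := by
  simp only [eReduct, union, Program.union, Program.mk.injEq, true_and]
  ext q
  simp only [Set.mem_ofPred_eq, Set.mem_union, or_and_right, exists_or]

lemma eReduct_inter_E {P : ELP V} (hP : P.wf) (Φ : Set (Lit V)) :
    P.eReduct (Φ ∩ P.E) = P.eReduct Φ := by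
  simp only [eReduct, Program.mk.injEq, true_and]
  ext q
  refine exists_congr fun r => and_congr_right fun hr => ?_
  obtain ⟨-, -, -, hepos, heneg⟩ := hP.2 r hr
  rw [ERule.reduct_inter hepos]
  refine and_congr_left fun _ => forall₂_congr fun ℓ hℓ => ?_
  simp [heneg hℓ]

lemma wf.eReduct {P : ELP V} (hP : P.wf) (Φ : Set (Lit V)) : (P.eReduct Φ).wf := by
  rintro _ ⟨r, hr, -, rfl⟩
  obtain ⟨hhead, hpos, hneg, hepos, heneg⟩ := hP.2 r hr
  refine ⟨hhead, hpos, ?_⟩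
  rintro ℓ ((hℓ | ⟨hℓ, -⟩) | ⟨m, hm, rfl⟩)
  · exact hneg ℓ hℓ
  · exact hP.1 ℓ (hepos hℓ)
  · rw [Lit.atom_flip]
    exact hP.1 m (heneg hm)

theorem realizable_inter_of_compatible {P : ELP V} (hP : P.wf) {E Φ : Set (Lit V)}
    {M : Set (Set V)} (hE : P.E ⊆ E) (hc : compatible E Φ M)
    (hM : ∀ J ∈ M, (P.eReduct Φ).model J) : P.realizable (Φ ∩ P.E) := by
  refine ⟨(· ∩ P.A) '' M, ?_, hc.1.image _, ?_, ?_⟩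
  · rintro _ ⟨J, hJ, rfl⟩
    refine ⟨Set.inter_subset_right, ?_⟩
    rw [eReduct_inter_E hP]
    exact fun r hr => (Rule.sat_inter_iff (hP.eReduct Φ r hr)).2 (hM J hJ r hr)
  · rintro ℓ ⟨hℓΦ, hℓE⟩
    obtain ⟨J, hJ, hns⟩ := hc.2.1 ℓ hℓΦ
    exact ⟨J ∩ P.A, ⟨J, hJ, rfl⟩, by rwa [Lit.sat_inter_iff (hP.1 ℓ hℓE)]⟩
  · rintro ℓ ⟨hℓE, hℓΦ⟩ _ ⟨J, hJ, rfl⟩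
    rw [Lit.sat_inter_iff (hP.1 ℓ hℓE)]
    exact hc.2.2 ℓ ⟨hE hℓE, fun h => hℓΦ ⟨h, hℓE⟩⟩ J hJ

theorem strongELPCWVEq_union_of_SEfun_subset {A : Set V} {E : Set (Lit V)}
    {R₁ R₂ : Set (ERule V)} (h₁ : (ELP.mk A E R₁).wf) (h₂ : (ELP.mk A E R₂).wf)
    (hSE : ∀ Φ ⊆ E, (ELP.mk A E R₁).SEfun Φ ⊆ (ELP.mk A E R₂).SEfun Φ) :
    strongELPCWVEq (ELP.mk A E R₁) ((ELP.mk A E R₁).union (ELP.mk A E R₂)) := by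
  set P₁ := ELP.mk A E R₁
  set P₂ := ELP.mk A E R₂
  intro Q _ M
  have hAS : ∀ Φ, compatible (E ∪ Q.E) Φ M → (∀ J ∈ M, (P₁.eReduct Φ).model J) →
      ((P₁.union Q).eReduct Φ).AS = (((P₁.union P₂).union Q).eReduct Φ).AS := by
    intro Φ hc hM
    have hreal := realizable_inter_of_compatible h₁ Set.subset_union_left hc hM
    have hSEΦ : (P₁.eReduct Φ).SE ⊆ (P₂.eReduct Φ).SE := by
      rw [← eReduct_inter_E h₁, ← eReduct_inter_E h₂]
      exact fun p hp => (hSE _ Set.inter_subset_right ⟨hreal, hp⟩).2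
    rw [eReduct_union, eReduct_union, eReduct_union]
    exact Program.AS_union_eq_of_SE_subset (h₁.eReduct Φ) (h₂.eReduct Φ) rfl hSEΦ _
  have hE : ((P₁.union P₂).union Q).E = (P₁.union Q).E := by
    simp [P₁, P₂, union]
  constructor
  · rintro ⟨Φ, hΦ, hMAS, hc⟩
    refine ⟨Φ, hE ▸ hΦ, hMAS.trans (hAS Φ hc ?_), hE ▸ hc⟩
    intro J hJ
    rw [hMAS, eReduct_union] at hJ
    exact (Program.model_union.1 hJ.2.1).1
  · rintro ⟨Φ, hΦ, hMAS, hc⟩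
    rw [hE] at hΦ hc
    refine ⟨Φ, hΦ, hMAS.trans (hAS Φ hc ?_).symm, hc⟩
    intro J hJ
    rw [hMAS, eReduct_union, eReduct_union] at hJ
    exact (Program.model_union.1 (Program.model_union.1 hJ.2.1).1).1

end ELP

/-- The rules guarded by `Lit.guard A Y` act only at `Y`, where their reduct is satisfied by
exactly two subsets of `Y`, namely `w Y` and `Y`; the constraints exclude everything outside `F`. -/
def seTest (A : Set V) (F : Set (Set V)) (w : Set V → Set V) : Set (Rule V) :=
  {t | ∃ Y ∈ F, ∃ a ∈ w Y, t = ⟨{a}, ∅, Lit.guard A Y⟩} ∪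
  {t | ∃ Y ∈ F, ∃ a ∈ Y, ∃ b ∈ Y \ w Y, t = ⟨{a}, {b}, Lit.guard A Y⟩} ∪
  {t | ∃ K ⊆ A, K ∉ F ∧ t = ⟨∅, ∅, Lit.guard A K⟩}

section seTest

variable {A : Set V} {F : Set (Set V)} {w : Set V → Set V}

lemma seTest_wf (hF : ∀ Y ∈ F, Y ⊆ A) (hw : ∀ Y ∈ F, w Y ⊆ Y) :
    ∀ t ∈ seTest A F w, t.wf A := by
  rintro t ((⟨Y, hY, a, ha, rfl⟩ | ⟨Y, hY, a, ha, b, hb, rfl⟩) | ⟨K, hK, -, rfl⟩)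
  · exact ⟨by simpa using hF Y hY (hw Y hY ha), by simp,
      fun _ => Lit.atom_mem_of_mem_guard (hF Y hY)⟩
  · exact ⟨by simpa using hF Y hY ha, by simpa using hF Y hY hb.1,
      fun _ => Lit.atom_mem_of_mem_guard (hF Y hY)⟩
  · exact ⟨by simp, by simp, fun _ => Lit.atom_mem_of_mem_guard hK⟩

lemma forall_sat_seTest_iff (hF : ∀ Y ∈ F, Y ⊆ A) (hw : ∀ Y ∈ F, w Y ⊆ Y) {J : Set V}
    (hJ : J ⊆ A) : (∀ t ∈ seTest A F w, t.sat J) ↔ J ∈ F := by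
  constructor
  · intro h
    by_contra hJF
    obtain ⟨_, ha, -⟩ := h _ (Or.inr ⟨J, hJ, hJF, rfl⟩)
      ⟨Set.empty_subset _, (Lit.forall_not_sat_guard_iff hJ hJ).2 rfl⟩
    exact ha
  · rintro hJF t ((⟨Y, hY, a, ha, rfl⟩ | ⟨Y, hY, a, ha, b, -, rfl⟩) | ⟨K, hK, hKF, rfl⟩) ⟨-, hg⟩
    · obtain rfl := (Lit.forall_not_sat_guard_iff (hF Y hY) hJ).1 hg
      exact ⟨a, rfl, hw _ hY ha⟩
    · obtain rfl := (Lit.forall_not_sat_guard_iff (hF Y hY) hJ).1 hg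
      exact ⟨a, rfl, ha⟩
    · obtain rfl := (Lit.forall_not_sat_guard_iff hK hJ).1 hg
      exact absurd hJF hKF

lemma forall_redSat_seTest_iff (hF : ∀ Y ∈ F, Y ⊆ A) (hw : ∀ Y ∈ F, w Y ⊆ Y) {Y M : Set V}
    (hY : Y ∈ F) (hM : M ⊆ Y) : (∀ t ∈ seTest A F w, t.redSat Y M) ↔ M = w Y ∨ M = Y := by
  have hg : ∀ {K}, K ⊆ A → (∀ ℓ ∈ Lit.guard A K, ¬ ℓ.sat Y) → Y = K :=
    fun hK => (Lit.forall_not_sat_guard_iff hK (hF Y hY)).1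
  have hgY : ∀ ℓ ∈ Lit.guard A Y, ¬ ℓ.sat Y :=
    (Lit.forall_not_sat_guard_iff (hF Y hY) (hF Y hY)).2 rfl
  constructor
  · intro h
    have hwM : w Y ⊆ M := fun a ha => by
      obtain ⟨_, rfl, haM⟩ := h _ (Or.inl (Or.inl ⟨Y, hY, a, ha, rfl⟩)) hgY (Set.empty_subset _)
      exact haM
    by_cases hMw : M ⊆ w Y
    · exact Or.inl (hMw.antisymm hwM)
    · obtain ⟨b, hbM, hbw⟩ := Set.not_subset.1 hMw
      refine Or.inr (hM.antisymm fun a ha => ?_)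
      obtain ⟨_, rfl, haM⟩ := h _ (Or.inl (Or.inr ⟨Y, hY, a, ha, b, ⟨hM hbM, hbw⟩, rfl⟩)) hgY
        (Set.singleton_subset_iff.2 hbM)
      exact haM
  · rintro hMY t ((⟨K, hK, a, ha, rfl⟩ | ⟨K, hK, a, ha, b, hb, rfl⟩) | ⟨K, hK, hKF, rfl⟩) hgK hpos
    · obtain rfl := hg (hF K hK) hgK
      exact ⟨a, rfl, hMY.elim (· ▸ ha) (· ▸ hw Y hY ha)⟩
    · obtain rfl := hg (hF K hK) hgK
      obtain rfl | rfl := hMY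
      · exact absurd (hpos rfl) hb.2
      · exact ⟨a, rfl, ha⟩
    · obtain rfl := hg hK hgK
      exact absurd hY hKF

theorem AS_union_seTest (hF : ∀ Y ∈ F, Y ⊆ A) (hw : ∀ Y ∈ F, w Y ⊆ Y) (R : Set (Rule V)) :
    (Program.mk A (R ∪ seTest A F w)).AS =
      {Y ∈ F | (Program.mk A R).model Y ∧ ¬ (w Y ⊂ Y ∧ (Program.mk A R).redModel Y (w Y))} := by
  ext Y
  simp only [Program.AS, Program.answerSet, Set.mem_ofPred_eq]
  constructor
  · rintro ⟨hYA, hmod, hmin⟩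
    have hYF := (forall_sat_seTest_iff hF hw hYA).1 fun t ht => hmod t (Or.inr ht)
    refine ⟨hYF, fun t ht => hmod t (Or.inl ht), fun ⟨hwY, hred⟩ => hmin ⟨w Y, hwY, ?_⟩⟩
    rintro t (ht | ht)
    exacts [hred t ht, (forall_redSat_seTest_iff hF hw hYF hwY.1).2 (Or.inl rfl) t ht]
  · rintro ⟨hYF, hmod, hstable⟩
    refine ⟨hF Y hYF, ?_, fun ⟨M, hM, hred⟩ => ?_⟩
    · rintro t (ht | ht)
      exacts [hmod t ht, (forall_sat_seTest_iff hF hw (hF Y hYF)).2 hYF t ht]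
    · obtain rfl | rfl := (forall_redSat_seTest_iff hF hw hYF hM.1).1 fun t ht => hred t (Or.inr ht)
      · exact hstable ⟨hM, fun t ht => hred t (Or.inl ht)⟩
      · exact hM.ne rfl

end seTest

lemma compatible_sdiff_singleton_or_insert {E Φ : Set (Lit V)} {I : Set (Set V)}
    (h : compatible E Φ I) (Y : Set V) :
    compatible E Φ (I \ {Y}) ∨ compatible E Φ (insert Y I) := by
  by_cases hY : ∀ ℓ ∈ E \ Φ, ℓ.sat Y
  · refine Or.inr ⟨Set.insert_nonempty _ _, fun ℓ hℓ => ?_, ?_⟩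
    · obtain ⟨J, hJ, hns⟩ := h.2.1 ℓ hℓ
      exact ⟨J, Or.inr hJ, hns⟩
    · rintro ℓ hℓ J (rfl | hJ)
      exacts [hY ℓ hℓ, h.2.2 ℓ hℓ J hJ]
  · obtain ⟨ℓ, hℓ, hns⟩ := not_forall₂.1 hY
    left
    rwa [Set.sdiff_singleton_eq_self fun hYI => hns (h.2.2 ℓ hℓ Y hYI)]

def compatStrongEq (A : Set V) (E Φ : Set (Lit V)) (R₁ R₂ : Set (Rule V)) : Prop :=
  ∀ T : Set (Rule V), (∀ t ∈ T, t.wf A) →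
    compatible E Φ (Program.mk A (R₁ ∪ T)).AS ∨ compatible E Φ (Program.mk A (R₂ ∪ T)).AS →
    (Program.mk A (R₁ ∪ T)).AS = (Program.mk A (R₂ ∪ T)).AS

section compatStrongEq

variable {A : Set V} {E Φ : Set (Lit V)} {R₁ R₂ : Set (Rule V)} {I : Set (Set V)}

lemma model_of_compatStrongEq (hH : compatStrongEq A E Φ R₁ (R₁ ∪ R₂))
    (hI : ∀ J ∈ I, J ⊆ A ∧ (Program.mk A R₁).model J) (hc : compatible E Φ I) :
    ∀ J ∈ I, (Program.mk A R₂).model J := by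
  have hF : ∀ J ∈ I, J ⊆ A := fun J hJ => (hI J hJ).1
  have hw : ∀ J ∈ I, id J ⊆ J := fun _ _ => subset_rfl
  have hAS₁ : (Program.mk A (R₁ ∪ seTest A I id)).AS = I := by
    rw [AS_union_seTest hF hw]
    exact Set.sep_eq_self_iff_mem_true.2 fun J hJ => ⟨(hI J hJ).2, fun h => h.1.ne rfl⟩
  have hAS := hH _ (seTest_wf hF hw) (Or.inl (by rwa [hAS₁]))
  intro J hJ t ht
  rw [hAS₁] at hAS
  exact (hAS ▸ hJ : J ∈ (Program.mk A ((R₁ ∪ R₂) ∪ seTest A I id)).AS).2.1 t (Or.inl (Or.inr ht))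

/-- With `w Y = X`, the context `seTest` makes the answer sets of both sides `I \ {Y}` or
`insert Y (I \ {Y})`, and one of these two families is compatible. -/
lemma model_and_not_redModel_iff_of_compatStrongEq (hH : compatStrongEq A E Φ R₁ (R₁ ∪ R₂))
    (hI : ∀ J ∈ I, J ⊆ A ∧ (Program.mk A R₁).model J) (hc : compatible E Φ I)
    (hI₂ : ∀ J ∈ I, (Program.mk A R₂).model J) {X Y : Set V} (hXY : X ⊆ Y) (hY : Y ⊆ A) :
    ((Program.mk A R₁).model Y ∧ ¬ (X ⊂ Y ∧ (Program.mk A R₁).redModel Y X)) ↔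
      ((Program.mk A (R₁ ∪ R₂)).model Y ∧ ¬ (X ⊂ Y ∧ (Program.mk A (R₁ ∪ R₂)).redModel Y X)) := by
  classical
  set I₁ := I \ {Y}
  set w := Function.update id Y X
  have hF : ∀ J ∈ insert Y I₁, J ⊆ A := by
    rintro J (rfl | hJ)
    exacts [hY, (hI J hJ.1).1]
  have hw : ∀ J ∈ insert Y I₁, w J ⊆ J := by
    rintro J (rfl | hJ)
    · simpa [w] using hXY
    · simp [w, Function.update_of_ne (show J ≠ Y from hJ.2)]
  set T := seTest A (insert Y I₁) w
  have hAS : ∀ R : Set (Rule V), (∀ J ∈ I₁, (Program.mk A R).model J) →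
      ((Program.mk A (R ∪ T)).AS = I₁ ∨ (Program.mk A (R ∪ T)).AS = insert Y I₁) ∧
      (Y ∈ (Program.mk A (R ∪ T)).AS ↔
        (Program.mk A R).model Y ∧ ¬ (X ⊂ Y ∧ (Program.mk A R).redModel Y X)) := by
    intro R hR
    rw [AS_union_seTest hF hw]
    have hI₁ : I₁ ⊆ {J ∈ insert Y I₁ | (Program.mk A R).model J ∧
        ¬ (w J ⊂ J ∧ (Program.mk A R).redModel J (w J))} := fun J hJ => by
      simpa [w, Function.update_of_ne (show J ≠ Y from hJ.2), hJ] using hR J hJ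
    refine ⟨?_, by simp [w]⟩
    by_cases hYmem : Y ∈ {J ∈ insert Y I₁ | (Program.mk A R).model J ∧
        ¬ (w J ⊂ J ∧ (Program.mk A R).redModel J (w J))}
    · exact Or.inr ((Set.sep_subset _ _).antisymm (Set.insert_subset_iff.2 ⟨hYmem, hI₁⟩))
    · exact Or.inl ((Set.subset_insert_iff_of_notMem hYmem).1 (Set.sep_subset _ _) |>.antisymm hI₁)
  obtain ⟨hAS₁, hY₁⟩ := hAS R₁ fun J hJ => (hI J hJ.1).2
  obtain ⟨hAS₂, hY₂⟩ := hAS (R₁ ∪ R₂) fun J hJ t ht =>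
    ht.elim ((hI J hJ.1).2 t) (hI₂ J hJ.1 t)
  have hcY : compatible E Φ I₁ ∨ compatible E Φ (insert Y I₁) := by
    rw [Set.insert_sdiff_singleton]
    exact compatible_sdiff_singleton_or_insert hc Y
  have hH' := hH T (seTest_wf hF hw)
  have hASeq : (Program.mk A (R₁ ∪ T)).AS = (Program.mk A ((R₁ ∪ R₂) ∪ T)).AS := by
    rcases hAS₁ with h₁ | h₁ <;> rcases hAS₂ with h₂ | h₂ <;> rw [h₁, h₂] at hH' ⊢ <;> tauto
  rw [← hY₁, ← hY₂, hASeq]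

theorem SE_subset_of_compatStrongEq (hH : compatStrongEq A E Φ R₁ (R₁ ∪ R₂))
    (hI : ∀ J ∈ I, J ⊆ A ∧ (Program.mk A R₁).model J) (hc : compatible E Φ I) :
    (Program.mk A R₁).SE ⊆ (Program.mk A R₂).SE := by
  have hI₂ := model_of_compatStrongEq hH hI hc
  rintro ⟨X, Y⟩ ⟨hXY : X ⊆ Y, hYA : Y ⊆ A, hY₁ : (Program.mk A R₁).model Y,
    hX₁ : (Program.mk A R₁).redModel Y X⟩
  have hY₂ : (Program.mk A R₂).model Y := fun t ht =>
    ((model_and_not_redModel_iff_of_compatStrongEq hH hI hc hI₂ subset_rfl hYA).1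
      ⟨hY₁, fun h => h.1.ne rfl⟩).1 t (Or.inr ht)
  refine ⟨hXY, hYA, hY₂, ?_⟩
  rcases LE.le.eq_or_ssubset hXY with rfl | hXY'
  · exact fun t ht => Rule.sat_iff_redSat_self.1 (hY₂ t ht)
  · by_contra hX₂
    refine ((model_and_not_redModel_iff_of_compatStrongEq hH hI hc hI₂ hXY hYA).2
      ⟨fun t ht => ht.elim (hY₁ t) (hY₂ t), fun h => hX₂ fun t ht => h.2 t (Or.inr ht)⟩).2
      ⟨hXY', hX₁⟩

end compatStrongEq

/-- `⊥ ← ¬ not ℓ`: with compatibility, it forces `ℓ` into the guess of a candidate world view. -/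
def ERule.forceGuess (ℓ : Lit V) : ERule V := ⟨∅, ∅, ∅, ∅, {ℓ}⟩

def guessTest (A : Set V) (Φ : Set (Lit V)) (T : Set (Rule V)) : ELP V :=
  ⟨A, Φ, ERule.forceGuess '' Φ ∪ Rule.toERule '' T⟩

section guessTest

variable {A : Set V} {Φ : Set (Lit V)} {T : Set (Rule V)}

lemma guessTest_wf (hΦ : ∀ ℓ ∈ Φ, ℓ.atom ∈ A) (hT : ∀ t ∈ T, t.wf A) :
    (guessTest A Φ T).wf := by
  refine ⟨hΦ, ?_⟩
  rintro _ (⟨ℓ, hℓ, rfl⟩ | ⟨t, ht, rfl⟩)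
  · simpa [ERule.forceGuess, ERule.wf, guessTest] using hℓ
  · obtain ⟨hhead, hpos, hneg⟩ := hT t ht
    exact ⟨hhead, hpos, hneg, by simp [Rule.toERule], by simp [Rule.toERule]⟩

lemma eReduct_guessTest (Φ' : Set (Lit V)) :
    (guessTest A Φ T).eReduct Φ' =
      ⟨A, (fun ℓ => (⟨∅, ∅, {ℓ.flip}⟩ : Rule V)) '' (Φ \ Φ') ∪ T⟩ := by
  simp only [ELP.eReduct, guessTest, Program.mk.injEq, true_and]
  ext q
  simp only [Set.mem_ofPred_eq, Set.mem_union, Set.mem_image, Set.mem_sdiff]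
  constructor
  · rintro ⟨_, ⟨ℓ, hℓ, rfl⟩ | ⟨t, ht, rfl⟩, hsurv, rfl⟩
    · exact Or.inl ⟨ℓ, ⟨hℓ, hsurv ℓ rfl⟩, by simp [ERule.forceGuess, ERule.reduct]⟩
    · exact Or.inr (by rwa [Rule.toERule_reduct])
  · rintro (⟨ℓ, ⟨hℓ, hℓ'⟩, rfl⟩ | hq)
    · exact ⟨_, Or.inl ⟨ℓ, hℓ, rfl⟩, fun _ h => h ▸ hℓ',
        by simp [ERule.forceGuess, ERule.reduct]⟩
    · exact ⟨_, Or.inr ⟨q, hq, rfl⟩, fun _ h => h.elim, (Rule.toERule_reduct q Φ').symm⟩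

lemma sat_constraint_flip_iff {ℓ : Lit V} {J : Set V} :
    (Rule.mk ∅ ∅ {ℓ.flip}).sat J ↔ ¬ ℓ.sat J := by
  simp [Rule.sat, Lit.sat_flip]

/-- A guess missing some `ℓ ∈ Φ` is ruled out by `⊥ ← ¬ not ℓ`, a guess with a literal outside
`Φ` by `hM`. -/
theorem isCWV_union_guessTest_iff {P : ELP V} (hPA : P.A ⊆ A) (hΦ : Φ ⊆ P.E)
    {M : Set (Set V)} (hM : ∀ ℓ ∈ P.E \ Φ, ∀ J ∈ M, ℓ.sat J) :
    (P.union (guessTest A Φ T)).isCWV M ↔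
      M = (Program.mk A ((P.eReduct Φ).R ∪ T)).AS ∧ compatible P.E Φ M := by
  have hE : (P.union (guessTest A Φ T)).E = P.E := Set.union_eq_left.2 hΦ
  have hred : ∀ Φ', (P.union (guessTest A Φ T)).eReduct Φ' =
      ⟨A, (P.eReduct Φ').R ∪ ((fun ℓ => (⟨∅, ∅, {ℓ.flip}⟩ : Rule V)) '' (Φ \ Φ') ∪ T)⟩ := by
    intro Φ'
    rw [ELP.eReduct_union, eReduct_guessTest]
    simp only [Program.union, ELP.eReduct, Set.union_eq_right.2 hPA]
  constructor
  · rintro ⟨Φ', hΦ', hMAS, hc⟩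
    rw [hE] at hΦ' hc
    have hΦΦ' : Φ ⊆ Φ' := fun ℓ hℓ => by
      by_contra hℓ'
      obtain ⟨J, hJ⟩ := hc.1
      have hJAS := hMAS ▸ hJ
      rw [hred] at hJAS
      exact sat_constraint_flip_iff.1 (hJAS.2.1 _ (Or.inr (Or.inl ⟨ℓ, ⟨hℓ, hℓ'⟩, rfl⟩)))
        (hc.2.2 ℓ ⟨hΦ hℓ, hℓ'⟩ J hJ)
    have hΦ'Φ : Φ' ⊆ Φ := fun ℓ hℓ => by
      by_contra hℓ'
      obtain ⟨J, hJ, hns⟩ := hc.2.1 ℓ hℓ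
      exact hns (hM ℓ ⟨hΦ' hℓ, hℓ'⟩ J hJ)
    obtain rfl := hΦ'Φ.antisymm hΦΦ'
    rw [hred, Set.sdiff_self, Set.image_empty, Set.empty_union] at hMAS
    exact ⟨hMAS, hc⟩
  · rintro ⟨hMAS, hc⟩
    refine ⟨Φ, hE ▸ hΦ, ?_, hE ▸ hc⟩
    rwa [hred, Set.sdiff_self, Set.image_empty, Set.empty_union]

end guessTest

theorem ELP.compatStrongEq_of_strongELPCWVEq {P₁ P₂ : ELP V} (h : ELP.strongELPCWVEq P₁ P₂)
    {A : Set V} {Φ : Set (Lit V)} (hE : P₁.E = P₂.E) (hA₁ : P₁.A ⊆ A) (hA₂ : P₂.A ⊆ A)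
    (hΦ : Φ ⊆ P₁.E) (hΦA : ∀ ℓ ∈ Φ, ℓ.atom ∈ A) :
    compatStrongEq A P₁.E Φ (P₁.eReduct Φ).R (P₂.eReduct Φ).R := by
  intro T hT hc
  have hQ := guessTest_wf hΦA hT
  rcases hc with hc | hc
  · have h₁ := (isCWV_union_guessTest_iff (T := T) hA₁ hΦ hc.2.2).2 ⟨rfl, hc⟩
    have h₂ := isCWV_union_guessTest_iff (T := T) hA₂ (hE ▸ hΦ) (hE ▸ hc.2.2)
    exact (h₂.1 ((h _ hQ _).1 h₁)).1
  · have h₂ := (isCWV_union_guessTest_iff (T := T) hA₂ (hE ▸ hΦ) (hE ▸ hc.2.2)).2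
      ⟨rfl, hE ▸ hc⟩
    have h₁ := isCWV_union_guessTest_iff (T := T) hA₁ hΦ hc.2.2
    exact (h₁.1 ((h _ hQ _).2 h₂)).1.symm

theorem ELP.SEfun_subset_of_strongELPCWVEq_union {A : Set V} {E : Set (Lit V)}
    {R₁ R₂ : Set (ERule V)} (hwf : (ELP.mk A E R₁).wf)
    (h : ELP.strongELPCWVEq (ELP.mk A E R₁) ((ELP.mk A E R₁).union (ELP.mk A E R₂))) :
    ∀ Φ ⊆ E, (ELP.mk A E R₁).SEfun Φ ⊆ (ELP.mk A E R₂).SEfun Φ := by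
  rintro Φ hΦ p ⟨⟨I, hI, hc⟩, hp⟩
  have hH : compatStrongEq A E Φ ((ELP.mk A E R₁).eReduct Φ).R
      (((ELP.mk A E R₁).eReduct Φ).R ∪ ((ELP.mk A E R₂).eReduct Φ).R) := by
    have := compatStrongEq_of_strongELPCWVEq h (Set.union_self E).symm subset_rfl
      (Set.union_self A).subset hΦ fun ℓ hℓ => hwf.1 ℓ (hΦ hℓ)
    rwa [ELP.eReduct_union] at this
  exact ⟨⟨I, fun J hJ => ⟨(hI hJ).1, model_of_compatStrongEq hH hI hc J hJ⟩, hc⟩,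
    SE_subset_of_compatStrongEq hH hI hc hp⟩

/-- An ELP rule `s` is subsumed by an ELP rule `r` (i.e. `P_r` is
strongly equivalent to `P_r ∪ P_s`) iff `𝒮ℰ_{P_r}(Φ) ⊆ 𝒮ℰ_{P_s}(Φ)` for all guesses
`Φ ⊆ ℰ`. -/
theorem stmt15 {V : Type} (A : Set V) (E : Set (Lit V)) (r s : ERule V)
    (hwfr : (ELP.mk A E {r}).wf) (hwfs : (ELP.mk A E {s}).wf) :
    ELP.strongELPCWVEq (ELP.mk A E {r}) ((ELP.mk A E {r}).union (ELP.mk A E {s})) ↔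
      ∀ Φ ⊆ E, (ELP.mk A E {r}).SEfun Φ ⊆ (ELP.mk A E {s}).SEfun Φ :=
  ⟨ELP.SEfun_subset_of_strongELPCWVEq_union hwfr,
    ELP.strongELPCWVEq_union_of_SEfun_subset hwfr hwfs⟩
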